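/- Let ξ and η be positive irrational real numbers and m a prime number with ξ·η = m. Suppose the indices (n, k) with n ≥ 1 and k ≥ 1 are connected, i.e. p_{n−1}·P_{k−1} = m·q_{n−1}·Q_{k−1}. Then either 0 ≤ b_n − m·B_k ≤ 2m − 2 or 0 ≤ B_k − m·b_n ≤ 2m − 2; in particular, since b_n ≥ 1 and B_k ≥ 1, the larger of the two connected partial quotients satisfies max(b_n, B_k) ≥ m. -/

import Mathlib

/-!
Since the convergents are reduced and `m` is prime, a connection
`p_{n-1} P_{k-1} = m q_{n-1} Q_{k-1}` forces, up to swapping `ξ` and `η`,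
`p_{n-1} = m Q_{k-1}` and `P_{k-1} = q_{n-1}`. Then `ξ η = m` makes the approximation errors
`p_{n-1} - ξ q_{n-1}` and `P_{k-1} - η Q_{k-1}` differ by the factor `-ξ`, and since
`|p_{n-1} - ξ q_{n-1}| = 1 / (q_{n-1} ξ_n + q_{n-2})` this gives
`Q_{k-1} η_k + Q_{k-2} = p_{n-1} ξ_n + p_{n-2}`, with the analogous identity for the numerators.
Hence `Q_{k-1} (η_k - m ξ_n)` and `P_{k-1} (η_k - m ξ_n)` are integers, so by coprimality
`η_k = m ξ_n + c` with `c ∈ ℤ`. The size of `Q_{k-1} c = p_{n-2} - Q_{k-2}` pins `c` to `[-1, m]`,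
and coprimality of consecutive convergents rules out `c = -1` and `c = m`. Taking floors gives
`B_k = ⌊m ξ_n⌋ + c ∈ [m b_n, m b_n + 2m - 2]`.
-/

/-- Complete quotients: `cq ξ 0 = ξ`, `cq ξ (n+1) = 1/(cq ξ n - ⌊cq ξ n⌋)`. -/
noncomputable def cq (ξ : ℝ) : ℕ → ℝ
  | 0 => ξ
  | n + 1 => 1 / (cq ξ n - ⌊cq ξ n⌋)

/-- Partial quotients: `pquot ξ n = b_n = ⌊ξ_n⌋`. -/
noncomputable def pquot (ξ : ℝ) (n : ℕ) : ℤ := ⌊cq ξ n⌋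

/-- Convergent numerators, shifted by one: `cnum ξ 0 = p_{-1} = 1`,
`cnum ξ 1 = p_0 = b_0`, and `cnum ξ (n+1) = p_n = b_n p_{n-1} + p_{n-2}`. -/
noncomputable def cnum (ξ : ℝ) : ℕ → ℤ
  | 0 => 1
  | 1 => pquot ξ 0
  | n + 2 => pquot ξ (n + 1) * cnum ξ (n + 1) + cnum ξ n

/-- Convergent denominators, shifted by one: `cden ξ 0 = q_{-1} = 0`,
`cden ξ 1 = q_0 = 1`, and `cden ξ (n+1) = q_n = b_n q_{n-1} + q_{n-2}`. -/
noncomputable def cden (ξ : ℝ) : ℕ → ℤ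
  | 0 => 0
  | 1 => 1
  | n + 2 => pquot ξ (n + 1) * cden ξ (n + 1) + cden ξ n

lemma neg_one_pow_sq {R : Type*} [Monoid R] [HasDistribNeg R] (n : ℕ) :
    ((-1 : R) ^ n) ^ 2 = 1 := by
  rw [← pow_mul, mul_comm, pow_mul, neg_one_sq, one_pow]

lemma exists_intCast_eq_of_isCoprime {R : Type*} [CommRing R] {a b r s : ℤ} {u : R}
    (hab : IsCoprime a b) (ha : a * u = r) (hb : b * u = s) : ∃ c : ℤ, u = c := by
  obtain ⟨x, y, hxy⟩ := hab
  have hxy' : (x : R) * a + y * b = 1 := by simpa using congrArg (Int.cast : ℤ → R) hxy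
  refine ⟨x * r + y * s, ?_⟩
  push_cast
  linear_combination -u * hxy' + x * ha + y * hb

lemma floor_natCast_mul_mem_Icc {R : Type*} [Ring R] [LinearOrder R] [IsStrictOrderedRing R]
    [FloorRing R] (x : R) {m : ℕ} (hm : 0 < m) :
    ⌊(m : R) * x⌋ ∈ Set.Icc (m * ⌊x⌋) (m * ⌊x⌋ + m - 1) := by
  have hm' : (0 : R) < m := by exact_mod_cast hm
  refine ⟨Int.le_floor.mpr ?_, Int.le_sub_one_of_lt (Int.floor_lt.mpr ?_)⟩
  · push_cast
    exact mul_le_mul_of_nonneg_left (Int.floor_le x) hm'.le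
  · push_cast
    rw [← mul_add_one]
    exact mul_lt_mul_of_pos_left (Int.lt_floor_add_one x) hm'

lemma eq_prime_mul_or_of_mul_eq_prime_mul {p q P Q : ℤ} {m : ℕ} (hm : m.Prime)
    (hpq : IsCoprime p q) (hPQ : IsCoprime P Q) (hp : 0 ≤ p) (hq : q ≠ 0) (hQ : 0 < Q)
    (h : p * P = m * q * Q) : (p = m * Q ∧ P = q) ∨ (p = Q ∧ P = m * q) := by
  obtain ⟨a, rfl⟩ : Q ∣ p := hPQ.symm.dvd_of_dvd_mul_right ⟨m * q, by linear_combination h⟩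
  obtain ⟨b, rfl⟩ : q ∣ P := hpq.symm.dvd_of_dvd_mul_left ⟨m * Q, by linear_combination h⟩
  have hab : a * b = m := by
    have : Q * q * (a * b - m) = 0 := by linear_combination h
    simpa [hQ.ne', hq, sub_eq_zero] using this
  have ha : 0 ≤ a := nonneg_of_mul_nonneg_right hp hQ
  have hadvd : a.natAbs ∣ m := by exact_mod_cast Int.natAbs_dvd_natAbs.mpr ⟨b, hab.symm⟩
  rcases hm.eq_one_or_self_of_dvd _ hadvd with ha1 | ham
  · have ha1 : a = 1 := by omega
    right
    subst ha1
    exact ⟨by ring, by rw [← hab]; ring⟩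
  · have ham : a = m := by omega
    subst ham
    have hb : b = 1 := by
      have hm0 : (m : ℤ) ≠ 0 := by exact_mod_cast hm.ne_zero
      exact (mul_eq_left₀ hm0).mp hab
    subst hb
    left
    exact ⟨by ring, by ring⟩

lemma cq_succ (ξ : ℝ) (n : ℕ) : cq ξ (n + 1) = (Int.fract (cq ξ n))⁻¹ := by
  rw [cq, one_div, Int.self_sub_floor]

lemma irrational_cq {ξ : ℝ} (h : Irrational ξ) : ∀ n, Irrational (cq ξ n)
  | 0 => h
  | n + 1 => by
    rw [cq_succ, Int.fract]
    exact ((irrational_cq h n).sub_intCast _).inv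

lemma cq_succ_nonneg (ξ : ℝ) (n : ℕ) : 0 ≤ cq ξ (n + 1) := by
  rw [cq_succ]
  exact inv_nonneg.mpr (Int.fract_nonneg _)

lemma one_lt_cq_succ {ξ : ℝ} (h : Irrational ξ) (n : ℕ) : 1 < cq ξ (n + 1) := by
  have hpos : 0 < Int.fract (cq ξ n) := Int.fract_pos.mpr ((irrational_cq h n).ne_int _)
  rw [cq_succ]
  exact one_lt_inv_iff₀.mpr ⟨hpos, Int.fract_lt_one _⟩

lemma pquot_succ_nonneg (ξ : ℝ) (n : ℕ) : 0 ≤ pquot ξ (n + 1) :=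
  Int.floor_nonneg.mpr (cq_succ_nonneg ξ n)

lemma pquot_nonneg {ξ : ℝ} (hξ : 0 ≤ ξ) : ∀ n, 0 ≤ pquot ξ n
  | 0 => Int.floor_nonneg.mpr hξ
  | n + 1 => pquot_succ_nonneg ξ n

lemma one_le_pquot_succ {ξ : ℝ} (h : Irrational ξ) (n : ℕ) : 1 ≤ pquot ξ (n + 1) :=
  Int.le_floor.mpr (by exact_mod_cast (one_lt_cq_succ h n).le)

lemma cnum_nonneg {ξ : ℝ} (hξ : 0 ≤ ξ) : ∀ n, 0 ≤ cnum ξ n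
  | 0 => zero_le_one
  | 1 => pquot_nonneg hξ 0
  | n + 2 => by
    have := pquot_nonneg hξ (n + 1)
    have := cnum_nonneg hξ (n + 1)
    have := cnum_nonneg hξ n
    rw [cnum]
    positivity

lemma cden_nonneg (ξ : ℝ) : ∀ n, 0 ≤ cden ξ n
  | 0 => le_rfl
  | 1 => zero_le_one
  | n + 2 => by
    have := pquot_succ_nonneg ξ n
    have := cden_nonneg ξ (n + 1)
    have := cden_nonneg ξ n
    rw [cden]
    positivity

lemma cden_le_cden_succ {ξ : ℝ} (h : Irrational ξ) : ∀ n, cden ξ n ≤ cden ξ (n + 1)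
  | 0 => zero_le_one
  | n + 1 => by
    have := one_le_pquot_succ h n
    have := cden_nonneg ξ (n + 1)
    have := cden_nonneg ξ n
    rw [cden]
    nlinarith

lemma one_le_cden_succ {ξ : ℝ} (h : Irrational ξ) : ∀ n, 1 ≤ cden ξ (n + 1)
  | 0 => le_rfl
  | n + 1 => (one_le_cden_succ h n).trans (cden_le_cden_succ h (n + 1))

lemma cnum_le_cnum_succ {ξ : ℝ} (hξ : 0 ≤ ξ) (h : Irrational ξ) {n : ℕ}
    (hn : 1 ≤ cnum ξ (n + 1)) : cnum ξ n ≤ cnum ξ (n + 1) := by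
  cases n with
  | zero => exact hn
  | succ n =>
    have := one_le_pquot_succ h n
    have := cnum_nonneg hξ (n + 1)
    have := cnum_nonneg hξ n
    rw [cnum]
    nlinarith

lemma cnum_mul_cden_succ_sub (ξ : ℝ) :
    ∀ n, cnum ξ n * cden ξ (n + 1) - cnum ξ (n + 1) * cden ξ n = (-1) ^ n
  | 0 => by simp [cnum, cden]
  | n + 1 => by
    rw [cnum, cden, pow_succ, ← cnum_mul_cden_succ_sub ξ n]
    ring

lemma isCoprime_cnum_cden (ξ : ℝ) (n : ℕ) : IsCoprime (cnum ξ n) (cden ξ n) :=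
  ⟨(-1) ^ n * cden ξ (n + 1), -(-1) ^ n * cnum ξ (n + 1), by
    linear_combination (-1 : ℤ) ^ n * cnum_mul_cden_succ_sub ξ n + neg_one_pow_sq (R := ℤ) n⟩

lemma isCoprime_cnum_cnum_succ (ξ : ℝ) (n : ℕ) : IsCoprime (cnum ξ n) (cnum ξ (n + 1)) :=
  ⟨(-1) ^ n * cden ξ (n + 1), -(-1) ^ n * cden ξ n, by
    linear_combination (-1 : ℤ) ^ n * cnum_mul_cden_succ_sub ξ n + neg_one_pow_sq (R := ℤ) n⟩

lemma mul_cden_mul_cq_add {ξ : ℝ} (h : Irrational ξ) : ∀ n,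
    ξ * (cden ξ (n + 1) * cq ξ (n + 1) + cden ξ n) = cnum ξ (n + 1) * cq ξ (n + 1) + cnum ξ n
  | 0 => by
    have hfrac : Int.fract ξ * cq ξ 1 = 1 := by
      rw [cq_succ, cq]
      exact mul_inv_cancel₀ (Int.fract_pos.mpr (h.ne_int _)).ne'
    simp only [cnum, cden, pquot, cq, Int.cast_one, Int.cast_zero] at hfrac ⊢
    rw [Int.fract] at hfrac
    linear_combination hfrac
  | n + 1 => by
    have hfrac : (cq ξ (n + 1) - pquot ξ (n + 1)) * cq ξ (n + 2) = 1 := by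
      rw [cq_succ (n := n + 1), pquot, Int.self_sub_floor]
      exact mul_inv_cancel₀ (Int.fract_pos.mpr ((irrational_cq h _).ne_int _)).ne'
    simp only [cnum, cden, Int.cast_add, Int.cast_mul]
    linear_combination cq ξ (n + 2) * mul_cden_mul_cq_add h n +
      (cnum ξ (n + 1) - ξ * cden ξ (n + 1)) * hfrac

lemma cden_mul_cq_add_pos {ξ : ℝ} (h : Irrational ξ) (n : ℕ) :
    0 < (cden ξ (n + 1) : ℝ) * cq ξ (n + 1) + cden ξ n := by
  have h1 : (1 : ℝ) ≤ cden ξ (n + 1) := by exact_mod_cast one_le_cden_succ h n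
  have h2 : (0 : ℝ) ≤ cden ξ n := by exact_mod_cast cden_nonneg ξ n
  nlinarith [one_lt_cq_succ h n]

lemma cden_mul_cq_add_mul_abs_sub {ξ : ℝ} (h : Irrational ξ) (n : ℕ) :
    (cden ξ (n + 1) * cq ξ (n + 1) + cden ξ n) * |cnum ξ (n + 1) - ξ * cden ξ (n + 1)| = 1 := by
  have hdet : ((cnum ξ n * cden ξ (n + 1) - cnum ξ (n + 1) * cden ξ n : ℤ) : ℝ) = (-1) ^ n := by
    exact_mod_cast cnum_mul_cden_succ_sub ξ n
  push_cast at hdet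
  have : (cden ξ (n + 1) * cq ξ (n + 1) + cden ξ n) * (cnum ξ (n + 1) - ξ * cden ξ (n + 1)) =
      -(-1) ^ n := by
    linear_combination -hdet - cden ξ (n + 1) * mul_cden_mul_cq_add h n
  rw [← abs_of_pos (cden_mul_cq_add_pos h n), ← abs_mul, this]
  simp

section Connected

variable {ξ η : ℝ} {m n k : ℕ}

lemma cden_mul_cq_add_eq_of_connected (hξ : 0 < ξ) (hξirr : Irrational ξ) (hηirr : Irrational η)
    (hmul : ξ * η = m) (hp : cnum ξ (n + 1) = m * cden η (k + 1))
    (hP : cnum η (k + 1) = cden ξ (n + 1)) :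
    cden η (k + 1) * cq η (k + 1) + cden η k = cnum ξ (n + 1) * cq ξ (n + 1) + cnum ξ n := by
  have hpR : (cnum ξ (n + 1) : ℝ) = m * cden η (k + 1) := by exact_mod_cast hp
  have hPR : (cnum η (k + 1) : ℝ) = cden ξ (n + 1) := by exact_mod_cast hP
  have hDξ := cden_mul_cq_add_mul_abs_sub hξirr n
  have hDη := cden_mul_cq_add_mul_abs_sub hηirr k
  rw [← mul_cden_mul_cq_add hξirr n]
  set e := (cnum ξ (n + 1) : ℝ) - ξ * cden ξ (n + 1)
  set E := (cnum η (k + 1) : ℝ) - η * cden η (k + 1)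
  set Dξ := (cden ξ (n + 1) : ℝ) * cq ξ (n + 1) + cden ξ n
  set Dη := (cden η (k + 1) : ℝ) * cq η (k + 1) + cden η k
  have herr : e = -(E * ξ) := by linear_combination ξ * hPR + hpR - (cden η (k + 1) : ℝ) * hmul
  calc Dη = Dη * (Dξ * |e|) := by rw [hDξ, mul_one]
    _ = ξ * Dξ * (Dη * |E|) := by rw [herr, abs_neg, abs_mul, abs_of_pos hξ]; ring
    _ = ξ * Dξ := by rw [hDη, mul_one]

lemma exists_cq_eq_mul_cq_add_int_of_connected (hξ : 0 < ξ) (hξirr : Irrational ξ)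
    (hηirr : Irrational η) (hmul : ξ * η = m) (hp : cnum ξ (n + 1) = m * cden η (k + 1))
    (hP : cnum η (k + 1) = cden ξ (n + 1)) :
    ∃ c : ℤ, cq η (k + 1) = m * cq ξ (n + 1) + c ∧
      cden η (k + 1) * c = cnum ξ n - cden η k ∧ cnum η (k + 1) * c = m * cden ξ n - cnum η k := by
  have hD := cden_mul_cq_add_eq_of_connected hξ hξirr hηirr hmul hp hP
  have hpR : (cnum ξ (n + 1) : ℝ) = m * cden η (k + 1) := by exact_mod_cast hp
  have hPR : (cnum η (k + 1) : ℝ) = cden ξ (n + 1) := by exact_mod_cast hP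
  have hQu : (cden η (k + 1) : ℝ) * (cq η (k + 1) - m * cq ξ (n + 1)) =
      ((cnum ξ n - cden η k : ℤ) : ℝ) := by
    push_cast
    linear_combination hD + cq ξ (n + 1) * hpR
  have hPu : (cnum η (k + 1) : ℝ) * (cq η (k + 1) - m * cq ξ (n + 1)) =
      ((m * cden ξ n - cnum η k : ℤ) : ℝ) := by
    push_cast
    linear_combination -mul_cden_mul_cq_add hηirr k + η * hD - η * mul_cden_mul_cq_add hξirr n
      + (cden ξ (n + 1) * cq ξ (n + 1) + cden ξ n) * hmul - m * cq ξ (n + 1) * hPR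
  obtain ⟨c, hc⟩ := exists_intCast_eq_of_isCoprime (isCoprime_cnum_cden η (k + 1)).symm hQu hPu
  rw [hc] at hQu hPu
  exact ⟨c, by linear_combination hc, by exact_mod_cast hQu, by exact_mod_cast hPu⟩

lemma shift_mem_Icc_of_connected (hξ : 0 ≤ ξ) (hξirr : Irrational ξ) (hηirr : Irrational η)
    (hm : 2 ≤ m) (hp : cnum ξ (n + 1) = m * cden η (k + 1)) {c : ℤ}
    (hQc : cden η (k + 1) * c = cnum ξ n - cden η k)
    (hPc : cnum η (k + 1) * c = m * cden ξ n - cnum η k) : c ∈ Set.Icc 0 ((m : ℤ) - 1) := by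
  have hQ := one_le_cden_succ hηirr k
  have hQ' := cden_le_cden_succ hηirr k
  have hQ'_nonneg := cden_nonneg η k
  have hp'_nonneg := cnum_nonneg hξ n
  have hp' : cnum ξ n ≤ cnum ξ (n + 1) := cnum_le_cnum_succ hξ hξirr (by rw [hp]; nlinarith)
  have hm_unit : ¬IsUnit (m : ℤ) := by rw [Int.isUnit_iff]; omega
  constructor
  · by_contra! hc
    have hp'_eq : cnum ξ n = 0 := by nlinarith
    exact hm_unit ((isCoprime_cnum_cnum_succ ξ n).isUnit_of_dvd' (hp'_eq ▸ dvd_zero _) ⟨_, hp⟩)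
  · have hcm : c ≤ m := by nlinarith
    refine Int.le_sub_one_of_lt (hcm.lt_of_ne ?_)
    rintro rfl
    have hQ'_eq : cden η k = 0 := by nlinarith
    have hdvd : (m : ℤ) ∣ cnum η k := ⟨cden ξ n - cnum η (k + 1), by linear_combination hPc⟩
    exact hm_unit ((isCoprime_cnum_cden η k).isUnit_of_dvd' hdvd (hQ'_eq ▸ dvd_zero _))

lemma pquot_sub_mul_pquot_mem_Icc_of_connected (hξ : 0 < ξ) (hξirr : Irrational ξ)
    (hηirr : Irrational η) (hm : 2 ≤ m) (hmul : ξ * η = m)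
    (hp : cnum ξ (n + 1) = m * cden η (k + 1)) (hP : cnum η (k + 1) = cden ξ (n + 1)) :
    pquot η (k + 1) - m * pquot ξ (n + 1) ∈ Set.Icc 0 (2 * (m : ℤ) - 2) := by
  obtain ⟨c, hcq, hQc, hPc⟩ := exists_cq_eq_mul_cq_add_int_of_connected hξ hξirr hηirr hmul hp hP
  obtain ⟨hc0, hc1⟩ := shift_mem_Icc_of_connected hξ.le hξirr hηirr hm hp hQc hPc
  obtain ⟨hfl0, hfl1⟩ := floor_natCast_mul_mem_Icc (cq ξ (n + 1)) (by omega : 0 < m)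
  rw [pquot, pquot, hcq, Int.floor_add_intCast]
  constructor <;> linarith

end Connected

/-- Corollary 2.7: for prime `m` and a connected pair `(n,k)`, either
`0 ≤ b_n - m·B_k ≤ 2m - 2` or `0 ≤ B_k - m·b_n ≤ 2m - 2`; in particular the
larger of the two connected partial quotients is at least `m`. -/
theorem connected_prime_ratio
    (ξ η : ℝ) (m : ℕ) (hξpos : 0 < ξ) (hηpos : 0 < η)
    (hξirr : Irrational ξ) (hηirr : Irrational η) (hmprime : Nat.Prime m)
    (hmul : ξ * η = m) (n k : ℕ) (hn : 1 ≤ n) (hk : 1 ≤ k)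
    (hconn : cnum ξ n * cnum η k = (m : ℤ) * cden ξ n * cden η k) :
    ((0 ≤ pquot ξ n - (m : ℤ) * pquot η k ∧
        pquot ξ n - (m : ℤ) * pquot η k ≤ 2 * (m : ℤ) - 2) ∨
     (0 ≤ pquot η k - (m : ℤ) * pquot ξ n ∧
        pquot η k - (m : ℤ) * pquot ξ n ≤ 2 * (m : ℤ) - 2)) ∧
    (m : ℤ) ≤ max (pquot ξ n) (pquot η k) := by
  obtain ⟨n, rfl⟩ := Nat.exists_eq_add_of_le' hn
  obtain ⟨k, rfl⟩ := Nat.exists_eq_add_of_le' hk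
  have hm := hmprime.two_le
  have hb := one_le_pquot_succ hξirr n
  have hB := one_le_pquot_succ hηirr k
  have hq := one_le_cden_succ hξirr n
  have hQ := one_le_cden_succ hηirr k
  rcases eq_prime_mul_or_of_mul_eq_prime_mul hmprime (isCoprime_cnum_cden ξ (n + 1))
      (isCoprime_cnum_cden η (k + 1)) (cnum_nonneg hξpos.le _) (by omega) (by omega) hconn
    with ⟨hp, hP⟩ | ⟨hp, hP⟩
  · obtain ⟨h0, h1⟩ :=
      pquot_sub_mul_pquot_mem_Icc_of_connected hξpos hξirr hηirr hm hmul hp hP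
    exact ⟨Or.inr ⟨h0, h1⟩, le_max_of_le_right (by nlinarith)⟩
  · obtain ⟨h0, h1⟩ := pquot_sub_mul_pquot_mem_Icc_of_connected hηpos hηirr hξirr hm
      (by rw [mul_comm, hmul]) hP hp
    exact ⟨Or.inl ⟨h0, h1⟩, le_max_of_le_left (by nlinarith)⟩
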